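/- In a Grothendieck topos, let q : X ⟶ Q be an epimorphism and let R be the subobject of X ⨯ X obtained by pulling back the diagonal subobject of Q ⨯ Q along the morphism q ⨯ q : X ⨯ X ⟶ Q ⨯ Q (the kernel-pair subobject of q). Then Q is decidable if and only if R is a complemented subobject of X ⨯ X. -/

import Mathlib

/-!
Formalisation of a statement from "On the profinite fundamental group of a
connected Grothendieck topos" (Berger–Iwaniack).  A Grothendieck topos is
modelled as `Sheaf J (Type u)` for a small site `(C, J)`.
-/

open CategoryTheory CategoryTheory.Limits

universe u

instance instHasColimitsSheafTypeAux {C : Type u} [SmallCategory C] {J : GrothendieckTopology C} :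
    HasColimits (Sheaf J (Type u)) :=
  @Sheaf.instHasColimitsOfSize C _ J (Type u) _ (instHasSheafifyType J).isRightAdjoint Types.hasColimitsOfSize.{u, u}

/-- A subobject `s` of `X` is complemented if it has a complement in the
subobject lattice of `X`. -/
def IsComplementedSub {C : Type u} [SmallCategory C] {J : GrothendieckTopology C}
    {X : Sheaf J (Type u)} (s : Subobject X) : Prop :=
  ∃ t : Subobject X, s ⊓ t = ⊥ ∧ s ⊔ t = ⊤

/-- An object is decidable if its diagonal, regarded as a subobject of `X ⨯ X`,
is complemented. -/
def IsDecidableObj {C : Type u} [SmallCategory C] {J : GrothendieckTopology C}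
    (X : Sheaf J (Type u)) : Prop :=
  IsComplementedSub (Subobject.mk (diag X))

/-- An object is connected if it is not initial and its only complemented
subobjects are `⊥` and `⊤`. -/
def IsConnectedObj {C : Type u} [SmallCategory C] {J : GrothendieckTopology C}
    (X : Sheaf J (Type u)) : Prop :=
  (¬ Nonempty (IsInitial X)) ∧
    ∀ s : Subobject X, IsComplementedSub s → s = ⊥ ∨ s = ⊤

/-- An object is locally connected if it is (isomorphic to) a coproduct of
connected objects. -/
def IsLocallyConnectedObj {C : Type u} [SmallCategory C] {J : GrothendieckTopology C}
    (X : Sheaf J (Type u)) : Prop :=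
  ∃ (I : Type u) (Z : I → Sheaf J (Type u)),
    (∀ i, IsConnectedObj (Z i)) ∧ Nonempty (X ≅ ∐ Z)

/-- An object is locally constant if it is trivialised, with constant fibres,
by some cover of the terminal object. -/
def IsLocallyConstantObj {C : Type u} [SmallCategory C] {J : GrothendieckTopology C}
    (X : Sheaf J (Type u)) : Prop :=
  ∃ (I : Type u) (U : I → Sheaf J (Type u)),
    Epi (terminal.from (∐ U)) ∧
    ∀ i, ∃ (S : Type u)
      (e : X ⨯ U i ≅ (constantSheaf J (Type u)).obj S ⨯ U i),
      e.hom ≫ Limits.prod.snd = Limits.prod.snd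

/-- An object is locally finite if it is trivialised, with finite constant
fibres, by some cover of the terminal object. -/
def IsLocallyFiniteObj {C : Type u} [SmallCategory C] {J : GrothendieckTopology C}
    (X : Sheaf J (Type u)) : Prop :=
  ∃ (I : Type u) (U : I → Sheaf J (Type u)),
    Epi (terminal.from (∐ U)) ∧
    ∀ i, ∃ (n : ℕ)
      (e : X ⨯ U i ≅ (constantSheaf J (Type u)).obj (ULift.{u} (Fin n)) ⨯ U i),
      e.hom ≫ Limits.prod.snd = Limits.prod.snd

/-- An object is finite if it is locally finite and a finite coproduct of
connected objects. -/
def IsFiniteObj {C : Type u} [SmallCategory C] {J : GrothendieckTopology C}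
    (X : Sheaf J (Type u)) : Prop :=
  IsLocallyFiniteObj X ∧
    ∃ (n : ℕ) (Z : Fin n → Sheaf J (Type u)),
      (∀ k, IsConnectedObj (Z k)) ∧ Nonempty (X ≅ ∐ Z)

/-- An object is a sum of finite objects if it is isomorphic to a coproduct of
finite objects. -/
def IsSumOfFiniteObj {C : Type u} [SmallCategory C] {J : GrothendieckTopology C}
    (X : Sheaf J (Type u)) : Prop :=
  ∃ (I : Type u) (Z : I → Sheaf J (Type u)),
    (∀ i, IsFiniteObj (Z i)) ∧ Nonempty (X ≅ ∐ Z)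

/-- A Galois object: a connected, globally supported object `A` such that the
canonical morphism `∐_{g ∈ Aut A} A ⟶ A ⨯ A` is an isomorphism. -/
def IsGaloisObj {C : Type u} [SmallCategory C] {J : GrothendieckTopology C}
    (A : Sheaf J (Type u)) : Prop :=
  IsConnectedObj A ∧ Epi (terminal.from A) ∧
    IsIso (Limits.Sigma.desc (f := fun _ : Aut A => A)
      (fun g => Limits.prod.lift (𝟙 A) g.hom))

/-!
Write `f = q × q`; it is an epimorphism because epimorphisms of sheaves are stable under
pullback. Pulling back along `f` preserves `⊥` (initial objects are strict) and, by
extensivity, joins covering the whole object, so it carries a complement of the diagonal `Δ`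
to a complement of `f*Δ`. Conversely, if `t` is a complement of `f*Δ`, its image `∃_f t` is a
complement of `Δ`: Frobenius reciprocity `∃_f (t ⊓ f*Δ) = ∃_f t ⊓ Δ` gives disjointness, and
`f*(Δ ⊔ ∃_f t) ≥ f*Δ ⊔ t = ⊤` forces `Δ ⊔ ∃_f t = ⊤` since `f` is epi.
-/

open MorphismProperty Opposite

namespace CategoryTheory

variable {D : Type*} [Category D]

theorem epi_prod_map [HasBinaryProducts D] [(epimorphisms D).IsStableUnderBaseChange]
    {A B X Y : D} (f : A ⟶ B) (g : X ⟶ Y) [Epi f] [Epi g] : Epi (prod.map f g) := by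
  have epi_map_id (Z : D) {A B : D} (f : A ⟶ B) [Epi f] : Epi (prod.map f (𝟙 Z)) :=
    (epimorphisms D).of_isPullback (IsPullback.of_prod_fst_with_id f Z) (.infer_property f)
  have swap : (prod.braiding B X).hom ≫ prod.map g (𝟙 B) ≫ (prod.braiding Y B).hom =
      prod.map (𝟙 B) g := by
    ext <;> simp [prod.lift_fst, prod.lift_snd, prod.lift_fst_assoc]
  have : Epi (prod.map (𝟙 B) g) := swap ▸ epi_comp _ _
  simpa [prod.map_map] using epi_comp (prod.map f (𝟙 X)) (prod.map (𝟙 B) g)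

theorem Regular.of_epimorphisms_isStableUnderBaseChange [HasFiniteLimits D] [HasCoequalizers D]
    [IsRegularEpiCategory D] [(epimorphisms D).IsStableUnderBaseChange] : Regular D where
  hasCoequalizer_of_isKernelPair _ := inferInstance
  regularEpiIsStableUnderBaseChange := ⟨fun {_ _ _ _} _ g _ _ sq (hg : IsRegularEpi g) => by
    have : Epi _ := (epimorphisms D).of_isPullback sq (.infer_property g)
    exact IsRegularEpiCategory.regularEpiOfEpi _⟩

theorem FinitaryExtensive.isColimit_pullback_inl_inr [FinitaryExtensive D] [HasPullbacks D]
    {S T P : D} (v : P ⟶ S ⨿ T) :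
    Nonempty (IsColimit (BinaryCofan.mk (pullback.snd coprod.inl v) (pullback.snd coprod.inr v))) :=
  ((BinaryCofan.isVanKampen_iff _).mp (FinitaryExtensive.vanKampen _ (coprodIsCoprod S T))
    (BinaryCofan.mk (pullback.snd coprod.inl v) (pullback.snd coprod.inr v))
    (pullback.fst _ _) (pullback.fst _ _) v pullback.condition pullback.condition).mpr
    ⟨(IsPullback.of_hasPullback coprod.inl v).flip, (IsPullback.of_hasPullback coprod.inr v).flip⟩

namespace Subobject

theorem eq_top_of_pullback_eq_top [HasPullbacks D] [Balanced D] {X Y : D} (f : X ⟶ Y) [Epi f]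
    {B : Subobject Y} (h : (pullback f).obj B = ⊤) : B = ⊤ := by
  have hB : B.Factors f := by
    simpa using (pullback_factors_iff f B (𝟙 X)).mp (h ▸ top_factors _)
  have : Epi B.arrow := epi_of_epi_fac (B.factorThru_arrow f hB)
  have : IsIso B.arrow := isIso_of_mono_of_epi _
  exact eq_top_of_isIso_arrow B

theorem eq_bot_of_isInitial [HasInitial D] [InitialMonoClass D] {Y : D} {P : Subobject Y}
    (hP : IsInitial (P : D)) : P = ⊥ :=
  le_bot_iff.mp (le_of_comm (hP.to _) (hP.hom_ext _ _))

theorem pullback_bot [HasPullbacks D] [HasInitial D] [HasStrictInitialObjects D] {X Y : D}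
    (f : X ⟶ Y) : (pullback f).obj (⊥ : Subobject Y) = ⊥ :=
  eq_bot_of_isInitial (initialIsInitial.ofStrict (pullbackπ f ⊥ ≫ botCoeIsoInitial.hom))

theorem factors_of_isColimit_binaryCofan {A B Z : D} {c : BinaryCofan A B} (hc : IsColimit c)
    {V : Subobject Z} {g : c.pt ⟶ Z} (hl : V.Factors (c.inl ≫ g)) (hr : V.Factors (c.inr ≫ g)) :
    V.Factors g := by
  obtain ⟨l, hll, hlr⟩ := BinaryCofan.IsColimit.desc' hc (V.factorThru _ hl) (V.factorThru _ hr)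
  have hl : l ≫ V.arrow = g := BinaryCofan.IsColimit.hom_ext hc
    (by rw [reassoc_of% hll]; exact factorThru_arrow _ _ _)
    (by rw [reassoc_of% hlr]; exact factorThru_arrow _ _ _)
  exact hl ▸ factors_comp_arrow l

theorem pullback_mk_inl_sup_pullback_mk_inr [FinitaryExtensive D] [HasPullbacks D] [HasImages D]
    {S T P : D} (v : P ⟶ S ⨿ T) :
    (pullback v).obj (mk coprod.inl) ⊔ (pullback v).obj (mk coprod.inr) = ⊤ := by
  obtain ⟨hc⟩ := FinitaryExtensive.isColimit_pullback_inl_inr v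
  have hid :
      ((pullback v).obj (mk coprod.inl) ⊔ (pullback v).obj (mk coprod.inr)).Factors (𝟙 P) := by
    refine factors_of_isColimit_binaryCofan hc ?_ ?_
    · refine sup_factors_of_factors_left ((pullback_factors_iff _ _ _).mpr ?_)
      change (mk coprod.inl).Factors ((pullback.snd coprod.inl v ≫ 𝟙 P) ≫ v)
      rw [Category.comp_id, ← pullback.condition]
      exact factors_of_factors_right _ (mk_factors_self _)
    · refine sup_factors_of_factors_right ((pullback_factors_iff _ _ _).mpr ?_)
      change (mk coprod.inr).Factors ((pullback.snd coprod.inr v ≫ 𝟙 P) ≫ v)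
      rw [Category.comp_id, ← pullback.condition]
      exact factors_of_factors_right _ (mk_factors_self _)
  rw [eq_top_iff, top_eq_id]
  exact mk_le_of_comm _ (factorThru_arrow _ _ hid)

theorem epi_coprod_desc_of_sup_eq_top [HasImages D] [HasBinaryCoproducts D] [HasEqualizers D]
    {Y : D} {s t : Subobject Y} (h : s ⊔ t = ⊤) : Epi (coprod.desc s.arrow t.arrow) := by
  have : IsIso (imageSubobject (coprod.desc s.arrow t.arrow)).arrow := by
    rw [isIso_arrow_iff_eq_top, eq_top_iff, ← h]
    exact sup_le
      (le_of_comm (coprod.inl ≫ factorThruImageSubobject _) (by simp [coprod.inl_desc]))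
      (le_of_comm (coprod.inr ≫ factorThruImageSubobject _) (by simp [coprod.inr_desc]))
  rw [← imageSubobject_arrow_comp (coprod.desc s.arrow t.arrow)]
  exact epi_comp _ _

theorem pullback_sup_pullback_eq_top [FinitaryExtensive D] [HasFiniteLimits D] [HasImages D]
    [Balanced D] [(epimorphisms D).IsStableUnderBaseChange] {X Y : D} (f : X ⟶ Y)
    {s t : Subobject Y} (h : s ⊔ t = ⊤) : (pullback f).obj s ⊔ (pullback f).obj t = ⊤ := by
  set u := coprod.desc s.arrow t.arrow
  have : Epi u := epi_coprod_desc_of_sup_eq_top h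
  have : Epi (pullback.snd u f) :=
    (epimorphisms D).of_isPullback (IsPullback.of_hasPullback u f) (.infer_property u)
  have le_pullback {Z : D} {i : Z ⟶ (s : D) ⨿ (t : D)} [Mono i] {r : Subobject Y}
      (hr : r.Factors (i ≫ u)) :
      (pullback (pullback.fst u f)).obj (mk i) ≤
        (pullback (pullback.snd u f)).obj ((pullback f).obj r) := by
    rw [← pullback_comp, ← pullback.condition, pullback_comp]
    exact (pullback _).monotone
      (mk_le_of_comm _ (factorThru_arrow _ _ ((pullback_factors_iff u r i).mpr hr)))
  refine eq_top_of_pullback_eq_top (pullback.snd u f) (top_unique ?_)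
  rw [← pullback_mk_inl_sup_pullback_mk_inr (pullback.fst u f)]
  exact sup_le
    ((le_pullback (by simpa only [u, coprod.inl_desc] using factors_self s)).trans
      ((pullback _).monotone le_sup_left))
    ((le_pullback (by simpa only [u, coprod.inr_desc] using factors_self t)).trans
      ((pullback _).monotone le_sup_right))

theorem isComplemented_pullback_obj [FinitaryExtensive D] [HasFiniteLimits D] [HasImages D]
    [Balanced D] [(epimorphisms D).IsStableUnderBaseChange] {X Y : D} (f : X ⟶ Y)
    {s : Subobject Y} (hs : IsComplemented s) : IsComplemented ((pullback f).obj s) := by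
  obtain ⟨t, ht⟩ := hs
  refine ⟨(pullback f).obj t, disjoint_iff.mpr ?_, codisjoint_iff.mpr ?_⟩
  · rw [← inf_pullback, ht.inf_eq_bot, pullback_bot]
  · exact pullback_sup_pullback_eq_top f ht.sup_eq_top

theorem isComplemented_of_isComplemented_pullback_obj [Regular D] [Balanced D]
    [HasBinaryCoproducts D] [HasInitial D] [InitialMonoClass D] {X Y : D} (f : X ⟶ Y) [Epi f]
    {s : Subobject Y} (hs : IsComplemented ((pullback f).obj s)) : IsComplemented s := by
  obtain ⟨t, ht⟩ := hs
  have gc := (existsPullbackAdj f).gc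
  refine ⟨(Subobject.exists f).obj t, disjoint_iff.mpr ?_, codisjoint_iff.mpr ?_⟩
  · rw [inf_comm, ← Regular.exists_inf_pullback_eq_exists_inf, inf_comm, ht.inf_eq_bot, gc.l_bot]
  · refine eq_top_of_pullback_eq_top f (top_unique (ht.sup_eq_top ▸ sup_le ?_ ?_))
    · exact (pullback f).monotone le_sup_left
    · exact (gc.le_u_l t).trans ((pullback f).monotone le_sup_right)

end Subobject

section Sheaf

universe w

instance Sheaf.epimorphisms_isStableUnderBaseChange {C : Type*} [Category C]
    {J : GrothendieckTopology C} [HasSheafify J (Type w)] :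
    (epimorphisms (Sheaf J (Type w))).IsStableUnderBaseChange where
  of_isPullback {X _ _ _} f g _ _ sq hg := by
    have : Epi g := hg
    simp only [epimorphisms.iff, ← Sheaf.isLocallySurjective_iff_epi] at *
    refine ⟨fun {U} s => J.superset_covering ?_
      (Presheaf.imageSieve_mem J g.hom (f.hom.app (op U) s))⟩
    -- pullbacks of sheaves are computed sectionwise, so a local lift of `f s` along `g`
    -- gives a local lift of `s`
    rintro V i ⟨y, hy⟩
    have sqV := sq.map ((sheafToPresheaf J (Type w)) ⋙ (evaluation Cᵒᵖ (Type w)).obj (op V))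
    obtain ⟨p, -, hp⟩ := Types.exists_of_isPullback sqV y (X.obj.map i.op s)
      (hy.trans (ConcreteCategory.congr_hom (f.hom.naturality i.op) s).symm)
    exact ⟨p, hp⟩

variable {C : Type u} [SmallCategory C] {J : GrothendieckTopology C}

instance : Regular (Sheaf J (Type u)) :=
  Regular.of_epimorphisms_isStableUnderBaseChange

theorem isComplementedSub_iff {X : Sheaf J (Type u)} (s : Subobject X) :
    IsComplementedSub s ↔ IsComplemented s := by
  simp only [IsComplementedSub, IsComplemented, isCompl_iff, disjoint_iff, codisjoint_iff]

end Sheaf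

end CategoryTheory

/-- for an epimorphism `q : X ⟶ Q`, the quotient `Q` is decidable
iff the kernel-pair subobject of `q` is complemented in `X ⨯ X`. -/
theorem quotient_decidable_iff_kernelPair_complemented
    {C : Type u} [SmallCategory C] {J : GrothendieckTopology C}
    {X Q : Sheaf J (Type u)} (q : X ⟶ Q) [Epi q] :
    IsDecidableObj Q ↔
      IsComplementedSub
        ((Subobject.pullback (Limits.prod.map q q)).obj (Subobject.mk (diag Q))) := by
  have : Epi (prod.map q q) := epi_prod_map q q
  rw [IsDecidableObj, isComplementedSub_iff, isComplementedSub_iff]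
  exact ⟨Subobject.isComplemented_pullback_obj _,
    Subobject.isComplemented_of_isComplemented_pullback_obj _⟩
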